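/- arXiv:1306.6707 — 2 statements merged into one kernel-verified Lean document; each statement's English description precedes it below -/
import Mathlib

section
/- Let p ≥ 1 be an integer and let w_1, …, w_{p+2} be odd integers with w_i ≥ 3 for all i. Set W = w_1 ⋯ w_{p+2}. Then, as rational numbers, 2W·(p + 1/2 - ∑_{i=1}^{p+2} 1/w_i) > (∑_{i=1}^{p+2} (w_i - 1)) + 3. -/
lemma aux1 {ι : Type*} [DecidableEq ι] (a : ι → ℚ) (s : Finset ι)
    (h : ∀ i ∈ s, 3 ≤ a i) :
    1 + ∑ i ∈ s, (a i - 1) ≤ ∏ i ∈ s, a i := by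
  induction s using Finset.induction_on with
  | empty => simp
  | @insert i t hx ih =>
    rw [Finset.sum_insert hx, Finset.prod_insert hx]
    have hi : 3 ≤ a i := h i (Finset.mem_insert_self i t)
    have ht : ∀ j ∈ t, 3 ≤ a j := fun j hj => h j (Finset.mem_insert_of_mem hj)
    have hih := ih ht
    have hS : 0 ≤ ∑ j ∈ t, (a j - 1) :=
      Finset.sum_nonneg fun j hj => by linarith [ht j hj]
    nlinarith [mul_le_mul_of_nonneg_left hih (by linarith : (0:ℚ) ≤ a i)]

lemma aux2 {ι : Type*} [DecidableEq ι] (a : ι → ℚ) (s : Finset ι)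
    (h : ∀ i ∈ s, 3 ≤ a i) (hc : 2 ≤ s.card) :
    (∑ i ∈ s, (a i - 1)) + 5 ≤ ∏ i ∈ s, a i := by
  have hc0 : 0 < s.card := by omega
  obtain ⟨i, hi⟩ := Finset.card_pos.mp hc0
  set t := s.erase i with hts
  have htc : 1 ≤ t.card := by
    rw [hts, Finset.card_erase_of_mem hi]
    omega
  have htc0 : 0 < t.card := htc
  obtain ⟨j, hj⟩ := Finset.card_pos.mp htc0
  have ht : ∀ k ∈ t, 3 ≤ a k := fun k hk => h k (Finset.mem_of_mem_erase hk)
  have hih := aux1 a t ht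
  have hSt : 2 ≤ ∑ k ∈ t, (a k - 1) := by
    calc (2:ℚ) ≤ a j - 1 := by linarith [ht j hj]
    _ ≤ ∑ k ∈ t, (a k - 1) :=
      Finset.single_le_sum (f := fun k => a k - 1) (fun k hk => show (0:ℚ) ≤ a k - 1 by linarith [ht k hk]) hj
  have hprod : a i * ∏ k ∈ t, a k = ∏ k ∈ s, a k :=
    Finset.mul_prod_erase s a hi
  have hsum : a i - 1 + ∑ k ∈ t, (a k - 1) = ∑ k ∈ s, (a k - 1) := by
    exact Finset.add_sum_erase s (fun k => a k - 1) hi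
  have hi3 : 3 ≤ a i := h i hi
  nlinarith [mul_le_mul_of_nonneg_left hih (by linarith : (0:ℚ) ≤ a i)]

theorem type2a_det_gt_genus (p : ℕ) (hp : 1 ≤ p) (w : Fin (p + 2) → ℤ)
    (hodd : ∀ i, Odd (w i)) (hw : ∀ i, 3 ≤ w i) :
    (∑ i, ((w i : ℚ) - 1)) + 3 <
      2 * (∏ i, (w i : ℚ)) * ((p : ℚ) + 1 / 2 - ∑ i, 1 / (w i : ℚ)) := by
  have hw3 : ∀ i ∈ (Finset.univ : Finset (Fin (p+2))), (3:ℚ) ≤ (w i : ℚ) := by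
    intro i _
    exact_mod_cast hw i
  have hW := aux2 (fun i => (w i : ℚ)) Finset.univ hw3 (by simp)
  have hT : ∑ i, 1 / (w i : ℚ) ≤ (p + 2) / 3 := by
    have : ∑ i, 1 / (w i : ℚ) ≤ ∑ _i : Fin (p+2), (1:ℚ)/3 := by
      apply Finset.sum_le_sum
      intro i hi
      have := hw3 i hi
      rw [div_le_div_iff₀ (by linarith) (by norm_num)]
      linarith
    have he : ∑ _i : Fin (p+2), (1:ℚ)/3 = ((p:ℚ) + 2) / 3 := by
      rw [Finset.sum_const, Finset.card_univ, Fintype.card_fin]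
      push_cast; ring
    linarith [this, he.le, he.ge]
  have hWpos : (0:ℚ) < ∏ i, (w i : ℚ) :=
    Finset.prod_pos fun i hi => by linarith [hw3 i hi]
  have hp1 : (1:ℚ) ≤ (p:ℚ) := by exact_mod_cast hp
  nlinarith [mul_le_mul_of_nonneg_left hT hWpos.le,
    mul_nonneg (by linarith : (0:ℚ) ≤ (p:ℚ) - 1) hWpos.le]
end

section
/- Let p ≥ 2 be an integer and let w_1, …, w_{p+2} be integers such that exactly one of them is even and at least 4, and all the others are odd and at least 3. Set W = w_1 ⋯ w_{p+2}. Then, as rational numbers, W·(p - ∑_{i=1}^{p+2} 1/w_i) > (∑_{i=1}^{p+2} w_i) - p. In particular W·(p - ∑ 1/w_i) ≥ W·(8p-7)/12. -/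
open Finset

private lemma three_pow_le_prod {ι : Type*} (s : Finset ι) (f : ι → ℚ)
    (h : ∀ i ∈ s, 3 ≤ f i) : (3 : ℚ) ^ s.card ≤ ∏ i ∈ s, f i := by
  induction s using Finset.cons_induction with
  | empty => simp
  | cons a s ha ih =>
    rw [Finset.prod_cons, Finset.card_cons, pow_succ]
    have h1 := ih (fun i hi => h i (Finset.mem_cons_of_mem hi))
    have h2 := h a (Finset.mem_cons_self a s)
    have h3 : (0 : ℚ) < 3 ^ s.card := by positivity
    nlinarith

private lemma two_sum_le_prod {ι : Type*} (s : Finset ι) (f : ι → ℚ) :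
    2 ≤ s.card → (∀ i ∈ s, 3 ≤ f i) →
    2 * ∑ i ∈ s, f i ≤ (∏ i ∈ s, f i) + 3 := by
  induction s using Finset.cons_induction with
  | empty => intro hcard _; simp at hcard
  | cons a s ha ih =>
    intro hcard h
    rw [Finset.sum_cons, Finset.prod_cons]
    have hfa := h a (Finset.mem_cons_self a s)
    have hs : ∀ i ∈ s, 3 ≤ f i := fun i hi => h i (Finset.mem_cons_of_mem hi)
    rcases lt_or_ge s.card 2 with hc | hc
    · have h1 : s.card = 1 := by
        have := Finset.card_cons ha ▸ hcard
        omega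
      obtain ⟨b, rfl⟩ := Finset.card_eq_one.mp h1
      simp only [Finset.sum_singleton, Finset.prod_singleton]
      have hb := hs b (Finset.mem_singleton_self b)
      nlinarith
    · have h1 := ih hc hs
      have h2 := three_pow_le_prod s f hs
      have h9 : (9 : ℚ) ≤ ∏ i ∈ s, f i := by
        calc (9 : ℚ) = 3 ^ 2 := by norm_num
        _ ≤ 3 ^ s.card := by
            apply pow_le_pow_right₀ (by norm_num) hc
        _ ≤ _ := h2
      nlinarith

theorem type3_2a_det_gt (p : ℕ) (hp : 2 ≤ p) (w : Fin (p + 2) → ℤ)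
    (i₀ : Fin (p + 2)) (heven : Even (w i₀)) (h4 : 4 ≤ w i₀)
    (hrest : ∀ j, j ≠ i₀ → Odd (w j) ∧ 3 ≤ w j) :
    (∑ i, (w i : ℚ)) - p < (∏ i, (w i : ℚ)) * ((p : ℚ) - ∑ i, 1 / (w i : ℚ)) ∧
      (∏ i, (w i : ℚ)) * ((8 * (p : ℚ) - 7) / 12) ≤
        (∏ i, (w i : ℚ)) * ((p : ℚ) - ∑ i, 1 / (w i : ℚ)) := by
  have hw3 : ∀ i, (3 : ℚ) ≤ (w i : ℚ) := by
    intro i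
    by_cases hi : i = i₀
    · subst hi
      have : (4 : ℚ) ≤ (w i : ℚ) := by exact_mod_cast h4
      linarith
    · exact_mod_cast (hrest i hi).2
  have hwpos : ∀ i, (0 : ℚ) < (w i : ℚ) := fun i => lt_of_lt_of_le (by norm_num) (hw3 i)
  have hWpos : (0 : ℚ) < ∏ i, (w i : ℚ) :=
    Finset.prod_pos fun i _ => hwpos i
  -- bound on the sum of reciprocals
  have hinv : ∑ i, 1 / (w i : ℚ) ≤ 1 / 4 + ((p : ℚ) + 1) / 3 := by
    have hsplit : ∑ i, 1 / (w i : ℚ) =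
        1 / (w i₀ : ℚ) + ∑ i ∈ Finset.univ.erase i₀, 1 / (w i : ℚ) :=
      (Finset.add_sum_erase _ _ (Finset.mem_univ i₀)).symm
    have h1 : 1 / (w i₀ : ℚ) ≤ 1 / 4 := by
      apply one_div_le_one_div_of_le (by norm_num)
      exact_mod_cast h4
    have h2 : ∑ i ∈ Finset.univ.erase i₀, 1 / (w i : ℚ) ≤
        (Finset.univ.erase i₀).card • ((1 : ℚ) / 3) := by
      apply Finset.sum_le_card_nsmul
      intro i _
      exact one_div_le_one_div_of_le (by norm_num) (hw3 i)
    have hcard : (Finset.univ.erase i₀).card = p + 1 := by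
      rw [Finset.card_erase_of_mem (Finset.mem_univ i₀), Finset.card_univ,
        Fintype.card_fin]
      omega
    rw [hcard, nsmul_eq_mul] at h2
    push_cast at h2
    rw [hsplit]
    linarith
  have hp' : (2 : ℚ) ≤ (p : ℚ) := by exact_mod_cast hp
  have key1 : (8 * (p : ℚ) - 7) / 12 ≤ (p : ℚ) - ∑ i, 1 / (w i : ℚ) := by
    linarith
  have part2 : (∏ i, (w i : ℚ)) * ((8 * (p : ℚ) - 7) / 12) ≤
      (∏ i, (w i : ℚ)) * ((p : ℚ) - ∑ i, 1 / (w i : ℚ)) :=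
    mul_le_mul_of_nonneg_left key1 hWpos.le
  refine ⟨?_, part2⟩
  -- sum vs product bound
  have hsum : 2 * ∑ i, (w i : ℚ) ≤ (∏ i, (w i : ℚ)) + 3 := by
    apply two_sum_le_prod
    · rw [Finset.card_univ, Fintype.card_fin]; omega
    · exact fun i _ => hw3 i
  have h34 : (∏ i, (w i : ℚ)) * (3 / 4) ≤
      (∏ i, (w i : ℚ)) * ((8 * (p : ℚ) - 7) / 12) := by
    apply mul_le_mul_of_nonneg_left _ hWpos.le
    linarith
  have hlt : (∑ i, (w i : ℚ)) - p < (∏ i, (w i : ℚ)) * (3 / 4) := by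
    nlinarith
  linarith
end
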